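/- arXiv:math/9912175 — 2 statements merged into one kernel-verified Lean document; each statement's English description precedes it below -/
import Mathlib

section
/- Let F: ℂ × H → ℂ be a meromorphic Jacobi form of index m and weight k over L ⋊ Γ, where L ⊂ ℂ is a lattice preserved by Γ ⊂ SL(2,ℤ), whose only possible polar divisors in ℂ × H are of the form t = (cτ + d)/l for integers c, d, l with l ≠ 0. If for every γ ∈ SL(2,ℤ) the transformed function F(γ(t,τ))|_{m,k} := (cτ+d)^{−k} e^{−2πimct²/(cτ+d)} F(t/(cτ+d), (aτ+b)/(cτ+d)) is holomorphic for all (t, τ) ∈ ℝ × H, then F is holomorphic on all of ℂ × H. -/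
open Complex

/-- The entries `a, b, c, d` of `γ ∈ SL(2,ℤ)`, as complex numbers. -/
def slA (γ : Matrix.SpecialLinearGroup (Fin 2) ℤ) : ℂ := ((γ : Matrix (Fin 2) (Fin 2) ℤ) 0 0 : ℂ)
def slB (γ : Matrix.SpecialLinearGroup (Fin 2) ℤ) : ℂ := ((γ : Matrix (Fin 2) (Fin 2) ℤ) 0 1 : ℂ)
def slC (γ : Matrix.SpecialLinearGroup (Fin 2) ℤ) : ℂ := ((γ : Matrix (Fin 2) (Fin 2) ℤ) 1 0 : ℂ)
def slD (γ : Matrix.SpecialLinearGroup (Fin 2) ℤ) : ℂ := ((γ : Matrix (Fin 2) (Fin 2) ℤ) 1 1 : ℂ)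

/-- The transformed function `F(γ(t,τ))|_{m,k}
  = (cτ+d)^{-k} e^{-2πimct²/(cτ+d)} F(t/(cτ+d), (aτ+b)/(cτ+d))`. -/
noncomputable def slashAction (F : ℂ → ℂ → ℂ) (m : ℝ) (k : ℤ)
    (γ : Matrix.SpecialLinearGroup (Fin 2) ℤ) (p : ℂ × ℂ) : ℂ :=
  (slC γ * p.2 + slD γ) ^ (-k) *
    Complex.exp (-(2 * (Real.pi : ℂ) * Complex.I * (m : ℂ) * slC γ * p.1 ^ 2 /
      (slC γ * p.2 + slD γ))) *
    F (p.1 / (slC γ * p.2 + slD γ)) ((slA γ * p.2 + slB γ) / (slC γ * p.2 + slD γ))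

/-!
Near a point `(t₀, τ₀)` of a polar divisor `t = (cτ + d)/l`, choose `γ ∈ SL(2, ℤ)` with bottom
row `(c, d)/gcd(c, d)`. Then `γ(t₀, τ₀)` has real first coordinate `gcd(c, d)/l`, and
`F = (F|γ⁻¹)|γ` is, near `(t₀, τ₀)`, the slash transform of a function holomorphic at
`γ(t₀, τ₀)`. The polar set meets every line `τ = const` in a countable set, so its complement is
dense, and `F` extends by limits: at every point the extension has the derivative of a local
holomorphic representative, since the first-order estimate passes from the dense set to a whole
neighbourhood by continuity.
-/

open Filter Topology Set Metric
open scoped MatrixGroups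

section Extension

variable {𝕜 E F : Type*} [NontriviallyNormedField 𝕜]
  [NormedAddCommGroup E] [NormedSpace 𝕜 E] [NormedAddCommGroup F] [NormedSpace 𝕜 F]

theorem HasFDerivWithinAt.hasFDerivAt_of_subset_closure {g : E → F} {L : E →L[𝕜] F}
    {s U : Set E} {x : E} (h : HasFDerivWithinAt g L s x) (hg : ContinuousOn g U)
    (hU : U ∈ 𝓝 x) (hUs : U ⊆ closure s) : HasFDerivAt g L x := by
  rw [hasFDerivAt_iff_isLittleO, Asymptotics.isLittleO_iff]
  intro c hc
  have hs := Asymptotics.isLittleO_iff.mp (hasFDerivWithinAt_iff_isLittleO.mp h) hc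
  obtain ⟨ε, hε, hball⟩ := Metric.mem_nhdsWithin_iff.mp hs
  obtain ⟨r, hr, hrU⟩ := nhds_basis_closedBall.mem_iff.mp (inter_mem hU (ball_mem_nhds x hε))
  -- the estimate holds on `ball x r ∩ s`, hence on its closure, which contains `ball x r`
  filter_upwards [ball_mem_nhds x hr] with y hy
  have hclosure : closure (ball x r ∩ s) ⊆ U ∩ ball x ε :=
    (closure_mono inter_subset_left).trans (closure_ball_subset_closedBall.trans hrU)
  refine le_on_closure (f := fun z => ‖g z - g x - L (z - x)‖) (g := fun z => c * ‖z - x‖)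
    (s := ball x r ∩ s) (fun z hz => hball ⟨(hrU (ball_subset_closedBall hz.1)).2, hz.2⟩)
    ?_ ?_ (isOpen_ball.inter_closure ⟨hy, hUs (hrU (ball_subset_closedBall hy)).1⟩)
  · exact ((hg.mono fun z hz => (hclosure hz).1).sub continuousOn_const).sub
      (L.continuous.comp_continuousOn (continuousOn_id.sub continuousOn_const)) |>.norm
  · exact continuousOn_const.mul (continuousOn_id.sub continuousOn_const).norm

variable {f : E → F} {S U : Set E}

theorem extendFrom_eq_of_eventuallyEq {H : E → F} {p : E} (hp : p ∈ closure S)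
    (hH : ContinuousWithinAt H S p) (hHf : H =ᶠ[𝓝[S] p] f) : extendFrom S f p = H p :=
  extendFrom_eq hp (hH.congr' hHf)

theorem differentiableOn_extendFrom (hU : IsOpen U) (hUS : U ⊆ closure S)
    (hloc : ∀ p ∈ U, ∃ H : E → F,
      DifferentiableWithinAt 𝕜 H S p ∧ H =ᶠ[𝓝[S] p] f) :
    DifferentiableOn 𝕜 (extendFrom S f) U := by
  have hcont : ContinuousOn (extendFrom S f) U := by
    refine continuousOn_extendFrom hUS fun p hp => ?_
    obtain ⟨H, hH, hHf⟩ := hloc p hp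
    exact ⟨H p, hH.continuousWithinAt.congr' hHf⟩
  intro p hp
  obtain ⟨H, hH, hHf⟩ := hloc p hp
  have hGf : extendFrom S f =ᶠ[𝓝[S] p] f := by
    filter_upwards [nhdsWithin_le_nhds (hU.mem_nhds hp), self_mem_nhdsWithin] with q hqU hqS
    obtain ⟨H', hH', hH'f⟩ := hloc q hqU
    rw [extendFrom_eq_of_eventuallyEq (hUS hqU) hH'.continuousWithinAt hH'f]
    exact hH'f.eq_of_nhdsWithin hqS
  have hGH : extendFrom S f =ᶠ[𝓝[S] p] H := hGf.trans hHf.symm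
  have hderiv := hH.hasFDerivWithinAt.congr_of_eventuallyEq hGH
    (extendFrom_eq_of_eventuallyEq (hUS hp) hH.continuousWithinAt hHf)
  exact (hderiv.hasFDerivAt_of_subset_closure hcont (hU.mem_nhds hp) hUS).differentiableAt
    |>.differentiableWithinAt

end Extension

lemma dense_compl_of_countable_slices {E F : Type*} [NormedAddCommGroup E] [NormedSpace ℝ E]
    [Nontrivial E] [TopologicalSpace F] {P : Set (E × F)}
    (hP : ∀ y, {x | (x, y) ∈ P}.Countable) : Dense Pᶜ := by
  rintro ⟨x, y⟩
  exact map_mem_closure (f := fun x' : E => (x', y)) (by fun_prop) ((hP y).dense_compl ℝ x)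
    fun _ hx => hx

lemma exists_eq_mul_bottomRow (c d : ℤ) :
    ∃ (γ : SL(2, ℤ)) (g : ℤ), c = g * γ 1 0 ∧ d = g * γ 1 1 := by
  rcases (Int.gcd c d).eq_zero_or_pos with h | h
  · obtain ⟨rfl, rfl⟩ := Int.gcd_eq_zero_iff.mp h
    exact ⟨1, 0, by simp, by simp⟩
  · obtain ⟨c', d', hcd', hc, hd⟩ := Int.exists_gcd_one h
    obtain ⟨γ, -, hγ⟩ := ModularGroup.bottom_row_surj (R := ℤ)
      (show ![c', d'] ∈ {cd : Fin 2 → ℤ | IsCoprime (cd 0) (cd 1)} from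
        Int.isCoprime_iff_gcd_eq_one.mpr hcd')
    have hγc : γ 1 0 = c' := by simpa using congrFun hγ 0
    have hγd : γ 1 1 = d' := by simpa using congrFun hγ 1
    exact ⟨γ, Int.gcd c d, by rw [hγc, mul_comm, ← hc], by rw [hγd, mul_comm, ← hd]⟩

noncomputable def jacobiMap (γ : SL(2, ℤ)) (p : ℂ × ℂ) : ℂ × ℂ :=
  (p.1 / (slC γ * p.2 + slD γ), (slA γ * p.2 + slB γ) / (slC γ * p.2 + slD γ))

section SpecialLinearGroup

variable (γ : SL(2, ℤ))

lemma slA_inv : slA γ⁻¹ = slD γ := by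
  simp [slA, slD, Matrix.SpecialLinearGroup.coe_inv, Matrix.adjugate_fin_two]

lemma slB_inv : slB γ⁻¹ = -slB γ := by
  simp [slB, Matrix.SpecialLinearGroup.coe_inv, Matrix.adjugate_fin_two]

lemma slC_inv : slC γ⁻¹ = -slC γ := by
  simp [slC, Matrix.SpecialLinearGroup.coe_inv, Matrix.adjugate_fin_two]

lemma slD_inv : slD γ⁻¹ = slA γ := by
  simp [slA, slD, Matrix.SpecialLinearGroup.coe_inv, Matrix.adjugate_fin_two]

lemma slA_mul_slD_sub_slB_mul_slC : slA γ * slD γ - slB γ * slC γ = 1 := by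
  have h := Matrix.det_fin_two (γ : Matrix (Fin 2) (Fin 2) ℤ)
  rw [Matrix.SpecialLinearGroup.det_coe] at h
  simp only [slA, slB, slC, slD]
  exact_mod_cast h.symm

lemma slC_mul_add_slD_ne_zero {τ : ℂ} (hτ : τ.im ≠ 0) : slC γ * τ + slD γ ≠ 0 := by
  intro h
  have hc : slC γ = 0 := by simpa [slC, slD, hτ] using congrArg Complex.im h
  have hd : slD γ = 0 := by simpa [hc] using h
  simpa [hc, hd] using slA_mul_slD_sub_slB_mul_slC γ

lemma moebius_im (τ : ℂ) :
    ((slA γ * τ + slB γ) / (slC γ * τ + slD γ)).im =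
      τ.im / Complex.normSq (slC γ * τ + slD γ) := by
  have hdet := congrArg Complex.re (slA_mul_slD_sub_slB_mul_slC γ)
  simp only [slA, slB, slC, slD, Complex.sub_re, Complex.mul_re, Complex.intCast_re,
    Complex.intCast_im, Complex.one_re] at hdet
  rw [Complex.div_im, ← sub_div]
  congr 1
  simp only [slA, slB, slC, slD, Complex.add_re, Complex.add_im, Complex.mul_re, Complex.mul_im,
    Complex.intCast_re, Complex.intCast_im]
  linear_combination τ.im * hdet

lemma im_jacobiMap_snd_pos {p : ℂ × ℂ} (hp : 0 < p.2.im) : 0 < (jacobiMap γ p).2.im := by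
  rw [jacobiMap, moebius_im]
  exact div_pos hp (Complex.normSq_pos.mpr (slC_mul_add_slD_ne_zero γ hp.ne'))

lemma slC_inv_mul_add_slD_inv {p : ℂ × ℂ} (hp : slC γ * p.2 + slD γ ≠ 0) :
    slC γ⁻¹ * (jacobiMap γ p).2 + slD γ⁻¹ = (slC γ * p.2 + slD γ)⁻¹ := by
  refine eq_inv_of_mul_eq_one_left ?_
  rw [slC_inv, slD_inv, jacobiMap]
  field_simp
  linear_combination slA_mul_slD_sub_slB_mul_slC γ

lemma jacobiMap_inv_jacobiMap {p : ℂ × ℂ} (hp : slC γ * p.2 + slD γ ≠ 0) :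
    jacobiMap γ⁻¹ (jacobiMap γ p) = p := by
  have hden := slC_inv_mul_add_slD_inv γ hp
  refine Prod.ext ?_ ?_
  · rw [jacobiMap, hden]
    simp [jacobiMap, hp]
  · rw [jacobiMap, hden, slA_inv, slB_inv, jacobiMap]
    dsimp only
    rw [div_inv_eq_mul, add_mul, mul_assoc, div_mul_cancel₀ _ hp]
    linear_combination p.2 * slA_mul_slD_sub_slB_mul_slC γ

end SpecialLinearGroup

lemma slashAction_apply (F : ℂ → ℂ → ℂ) (m : ℝ) (k : ℤ) (γ : SL(2, ℤ)) (p : ℂ × ℂ) :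
    slashAction F m k γ p = (slC γ * p.2 + slD γ) ^ (-k) *
      Complex.exp (-(2 * (Real.pi : ℂ) * Complex.I * (m : ℂ) * slC γ * p.1 ^ 2 /
        (slC γ * p.2 + slD γ))) * F (jacobiMap γ p).1 (jacobiMap γ p).2 := rfl

lemma slashAction_slashAction_inv (F : ℂ → ℂ → ℂ) (m : ℝ) (k : ℤ) (γ : SL(2, ℤ)) {p : ℂ × ℂ}
    (hp : slC γ * p.2 + slD γ ≠ 0) :
    slashAction (fun t τ => slashAction F m k γ⁻¹ (t, τ)) m k γ p = F p.1 p.2 := by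
  rw [slashAction_apply, slashAction_apply, jacobiMap_inv_jacobiMap γ hp,
    slC_inv_mul_add_slD_inv γ hp, slC_inv,
    show (jacobiMap γ p).1 = p.1 / (slC γ * p.2 + slD γ) from rfl]
  set w := slC γ * p.2 + slD γ
  have hexp : 2 * (Real.pi : ℂ) * Complex.I * m * -slC γ * (p.1 / w) ^ 2 / w⁻¹ =
      -(2 * (Real.pi : ℂ) * Complex.I * m * slC γ * p.1 ^ 2 / w) := by
    field_simp
  rw [hexp, neg_neg, inv_zpow', neg_neg, zpow_neg, Complex.exp_neg]
  field_simp

lemma eqOn_slashAction_of_eq_slashAction_inv {F : ℂ → ℂ → ℂ} {m : ℝ} {k : ℤ}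
    {γ : SL(2, ℤ)} {G : ℂ × ℂ → ℂ} {P : Set (ℂ × ℂ)}
    (hGF : ∀ q : ℂ × ℂ, 0 < q.2.im → jacobiMap γ⁻¹ q ∉ P →
      G q = slashAction F m k γ⁻¹ q) :
    EqOn (slashAction (fun t τ => G (t, τ)) m k γ) (fun q => F q.1 q.2)
      ({q | 0 < q.2.im} \ P) := by
  rintro q ⟨hq, hqP⟩
  have hden := slC_mul_add_slD_ne_zero γ (ne_of_gt hq)
  dsimp only
  rw [← slashAction_slashAction_inv F m k γ hden, slashAction_apply, slashAction_apply,
    hGF _ (im_jacobiMap_snd_pos γ hq) (by rwa [jacobiMap_inv_jacobiMap γ hden])]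

lemma differentiableAt_slashAction {G : ℂ × ℂ → ℂ} (m : ℝ) (k : ℤ)
    (γ : SL(2, ℤ)) {p : ℂ × ℂ} (hp : slC γ * p.2 + slD γ ≠ 0)
    (hG : DifferentiableAt ℂ G (jacobiMap γ p)) :
    DifferentiableAt ℂ (slashAction (fun t τ => G (t, τ)) m k γ) p := by
  have hmap : DifferentiableAt ℂ (jacobiMap γ) p := by
    unfold jacobiMap
    fun_prop (disch := exact hp)
  have hden : DifferentiableAt ℂ (fun q : ℂ × ℂ => slC γ * q.2 + slD γ) p := by fun_prop
  exact ((hden.zpow (Or.inl hp)).mul (by fun_prop (disch := exact hp))).mul (hG.comp p hmap)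

lemma countable_slice_of_subset_lines {P : Set (ℂ × ℂ)}
    (hP : P ⊆ {p : ℂ × ℂ | ∃ c d l : ℤ, l ≠ 0 ∧ p.1 = ((c : ℂ) * p.2 + (d : ℂ)) / (l : ℂ)})
    (τ : ℂ) : {t | (t, τ) ∈ P}.Countable := by
  refine (countable_range fun cdl : ℤ × ℤ × ℤ => ((cdl.1 : ℂ) * τ + cdl.2.1) / cdl.2.2).mono
    fun t ht => ?_
  obtain ⟨c, d, l, -, h⟩ := hP ht
  exact ⟨(c, d, l), h.symm⟩

lemma exists_im_jacobiMap_fst_eq_zero {c d l : ℤ} {p : ℂ × ℂ}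
    (hp : p.1 = ((c : ℂ) * p.2 + d) / l) : ∃ γ : SL(2, ℤ), (jacobiMap γ p).1.im = 0 := by
  obtain ⟨γ, g, hc, hd⟩ := exists_eq_mul_bottomRow c d
  refine ⟨γ, ?_⟩
  have hlin : (c : ℂ) * p.2 + d = g * (slC γ * p.2 + slD γ) := by
    simp only [slC, slD, hc, hd]
    push_cast
    ring
  rw [jacobiMap, hp, hlin]
  -- `x / 0 = 0` settles the case `cτ + d = 0` as well
  by_cases h0 : slC γ * p.2 + slD γ = 0
  · simp [h0]
  · rw [mul_div_right_comm, mul_div_assoc, div_self h0, mul_one]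
    simp [Complex.div_im]

theorem meromorphic_jacobi_form_holomorphic_general
    (F : ℂ → ℂ → ℂ) (m : ℝ) (k : ℤ)
    (P : Set (ℂ × ℂ))
    (hP : P ⊆ {p : ℂ × ℂ | ∃ c d l : ℤ, l ≠ 0 ∧ p.1 = ((c : ℂ) * p.2 + (d : ℂ)) / (l : ℂ)})
    (hF : DifferentiableOn ℂ (fun p : ℂ × ℂ => F p.1 p.2) ({p : ℂ × ℂ | 0 < p.2.im} \ P))
    (hhol : ∀ γ : Matrix.SpecialLinearGroup (Fin 2) ℤ, ∃ G : ℂ × ℂ → ℂ,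
      (∀ p : ℂ × ℂ, p.1.im = 0 → 0 < p.2.im → DifferentiableAt ℂ G p) ∧
      (∀ p : ℂ × ℂ, 0 < p.2.im →
        (p.1 / (slC γ * p.2 + slD γ),
          (slA γ * p.2 + slB γ) / (slC γ * p.2 + slD γ)) ∉ P →
        G p = slashAction F m k γ p)) :
    ∃ G : ℂ × ℂ → ℂ,
      DifferentiableOn ℂ G {p : ℂ × ℂ | 0 < p.2.im} ∧
      ∀ p : ℂ × ℂ, 0 < p.2.im → p ∉ P → G p = F p.1 p.2 := by
  set U : Set (ℂ × ℂ) := {p | 0 < p.2.im}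
  have hU : IsOpen U := isOpen_lt continuous_const (Complex.continuous_im.comp continuous_snd)
  have hUS : U ⊆ closure (U \ P) := by
    have hdense := dense_compl_of_countable_slices (countable_slice_of_subset_lines hP)
    simpa only [sdiff_eq, inter_comm] using hdense.open_subset_closure_inter hU
  refine ⟨extendFrom (U \ P) (fun p => F p.1 p.2),
    differentiableOn_extendFrom hU hUS fun p hp => ?_,
    fun p hp hpP => extendFrom_extends hF.continuousOn p ⟨hp, hpP⟩⟩
  by_cases hpP : p ∈ P
  · obtain ⟨c, d, l, -, hpt⟩ := hP hpP
    obtain ⟨γ, hγ⟩ := exists_im_jacobiMap_fst_eq_zero hpt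
    obtain ⟨G, hGdiff, hGF⟩ := hhol γ⁻¹
    have hden := slC_mul_add_slD_ne_zero γ (ne_of_gt hp)
    exact ⟨_, (differentiableAt_slashAction m k γ hden
      (hGdiff _ hγ (im_jacobiMap_snd_pos γ hp))).differentiableWithinAt,
      eventually_nhdsWithin_of_forall (eqOn_slashAction_of_eq_slashAction_inv hGF)⟩
  · exact ⟨_, hF p ⟨hp, hpP⟩, .rfl⟩

/-- Let `F` be a meromorphic Jacobi form of index `m` and weight `k` over `L ⋊ Γ`, whose
polar set `P ⊆ ℂ × H` is contained in the union of the divisors `t = (cτ+d)/l`, `l ≠ 0`.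
If for every `γ ∈ SL(2,ℤ)` the transformed function `F(γ(t,τ))|_{m,k}` is holomorphic at
all points of `ℝ × H` (i.e. extends holomorphically there), then `F` is holomorphic on
all of `ℂ × H` (i.e. extends to a holomorphic function on `ℂ × H`). -/
theorem meromorphic_jacobi_form_holomorphic
    (F : ℂ → ℂ → ℂ) (m : ℝ) (k : ℤ)
    (Γ : Subgroup (Matrix.SpecialLinearGroup (Fin 2) ℤ))
    (L : AddSubgroup (ℤ × ℤ))
    (P : Set (ℂ × ℂ))
    (hP : P ⊆ {p : ℂ × ℂ | ∃ c d l : ℤ, l ≠ 0 ∧ p.1 = ((c : ℂ) * p.2 + (d : ℂ)) / (l : ℂ)})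
    (hF : DifferentiableOn ℂ (fun p : ℂ × ℂ => F p.1 p.2) ({p : ℂ × ℂ | 0 < p.2.im} \ P))
    (hmod : ∀ γ ∈ Γ, ∀ t τ : ℂ, 0 < τ.im → (t, τ) ∉ P →
      F (t / (slC γ * τ + slD γ)) ((slA γ * τ + slB γ) / (slC γ * τ + slD γ)) =
        (slC γ * τ + slD γ) ^ k *
          Complex.exp (2 * (Real.pi : ℂ) * Complex.I * (m : ℂ) * slC γ * t ^ 2 /
            (slC γ * τ + slD γ)) * F t τ)
    (hell : ∀ l ∈ L, ∀ t τ : ℂ, 0 < τ.im → (t, τ) ∉ P →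
      F (t + (l.1 : ℂ) * τ + (l.2 : ℂ)) τ =
        Complex.exp (-(2 * (Real.pi : ℂ) * Complex.I * (m : ℂ) *
          ((l.1 : ℂ) ^ 2 * τ + 2 * (l.1 : ℂ) * t))) * F t τ)
    (hhol : ∀ γ : Matrix.SpecialLinearGroup (Fin 2) ℤ, ∃ G : ℂ × ℂ → ℂ,
      (∀ p : ℂ × ℂ, p.1.im = 0 → 0 < p.2.im → DifferentiableAt ℂ G p) ∧
      (∀ p : ℂ × ℂ, 0 < p.2.im →
        (p.1 / (slC γ * p.2 + slD γ),
          (slA γ * p.2 + slB γ) / (slC γ * p.2 + slD γ)) ∉ P →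
        G p = slashAction F m k γ p)) :
    ∃ G : ℂ × ℂ → ℂ,
      DifferentiableOn ℂ G {p : ℂ × ℂ | 0 < p.2.im} ∧
      ∀ p : ℂ × ℂ, 0 < p.2.im → p ∉ P → G p = F p.1 p.2 :=
  meromorphic_jacobi_form_holomorphic_general F m k P hP hF hhol
end

section
/- Let f(z,q) = Σ_{n≥0} c_n(z) qⁿ be holomorphic on the domain D_K = {(z,q) ∈ ℂ² : |q|^{1/K} < |z| < |q|^{−1/K}, 0 < |q| < 1} with each c_n a polynomial, and let g(z) be a polynomial not identically zero whose zeros lie on the unit circle. If for each n the rational function b_n(z) := c_n(z)/g(z) is in fact a Laurent polynomial in z, then h(z,q) = Σ_{n≥0} b_n(z) qⁿ defines a holomorphic function on D_K. -/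
open Complex

/-- The domain `D_K = {(z,q) : |q|^{1/K} < |z| < |q|^{-1/K}, 0 < |q| < 1}`. -/
def domDK (K : ℕ) : Set (ℂ × ℂ) :=
  {p : ℂ × ℂ | ‖p.2‖ ^ ((1 : ℝ) / K) < ‖p.1‖ ∧
    ‖p.1‖ < ‖p.2‖ ^ (-(1 : ℝ) / K) ∧
    0 < ‖p.2‖ ∧ ‖p.2‖ < 1}

open Metric Filter Set
open scoped ENNReal NNReal Topology

/-- Cauchy estimate for the coefficients of a power series from boundedness on a circle,
given convergence slightly beyond the circle. -/
lemma cauchy_coeff_bound {cs : ℕ → ℂ} {F : ℂ → ℂ} {ρ ρ' M : ℝ} (hρ : 0 < ρ) (hlt : ρ < ρ')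
    (hsum : ∀ q : ℂ, ‖q‖ = ρ → HasSum (fun n => cs n * q ^ n) (F q))
    (hconv : ∃ q : ℂ, ‖q‖ = ρ' ∧ Summable (fun n => cs n * q ^ n))
    (hM : ∀ q : ℂ, ‖q‖ = ρ → ‖F q‖ ≤ M) :
    ∀ n, ‖cs n‖ ≤ M / ρ ^ n := by
  set P : FormalMultilinearSeries ℂ ℂ ℂ :=
    fun n => ContinuousMultilinearMap.mkPiRing ℂ (Fin n) (cs n) with hP
  have hPnorm : ∀ n, ‖P n‖ = ‖cs n‖ := fun n => ContinuousMultilinearMap.norm_mkPiRing (𝕜 := ℂ) (ι := Fin n) _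
  have hPapp : ∀ (n : ℕ) (q : ℂ), (P n fun _ => q) = cs n * q ^ n := by
    intro n q
    rw [hP]
    rw [ContinuousMultilinearMap.mkPiRing_apply]
    simp [smul_eq_mul, mul_comm]
  -- radius bound
  obtain ⟨q₁, hq₁, hsq₁⟩ := hconv
  have hρ'0 : 0 < ρ' := hρ.trans hlt
  have hrad : (ρ'.toNNReal : ℝ≥0∞) ≤ P.radius := by
    apply P.le_radius_of_tendsto (l := 0)
    have h0 := hsq₁.tendsto_atTop_zero
    have := h0.norm
    simp only [norm_zero] at this
    convert this using 2 with n
    rw [norm_mul, norm_pow, hPnorm]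
    rw [Real.coe_toNNReal _ hρ'0.le]
    simp [hq₁]
  have hρrad : (ENNReal.ofReal ρ) < P.radius := by
    have h1 : ((ρ'.toNNReal : ℝ≥0) : ℝ≥0∞) = ENNReal.ofReal ρ' := rfl
    rw [h1] at hrad
    exact lt_of_lt_of_le ((ENNReal.ofReal_lt_ofReal_iff hρ'0).2 hlt) hrad
  have hradpos : 0 < P.radius := lt_of_le_of_lt zero_le hρrad
  have hball : HasFPowerSeriesOnBall P.sum P 0 P.radius := P.hasFPowerSeriesOnBall hradpos
  have hsub : closedBall (0:ℂ) ρ ⊆ Metric.eball (0:ℂ) P.radius := by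
    intro x hx
    simp only [mem_closedBall, dist_zero_right] at hx
    rw [Metric.mem_eball, edist_dist]
    calc ENNReal.ofReal (dist x 0)
        ≤ ENNReal.ofReal ρ := ENNReal.ofReal_le_ofReal (by simpa using hx)
      _ < P.radius := hρrad
  have hdiff : DifferentiableOn ℂ P.sum (closedBall (0:ℂ) ρ.toNNReal) := by
    refine (hball.differentiableOn).mono ?_
    simpa [Real.coe_toNNReal _ hρ.le] using hsub
  have hρnn : (0 : ℝ≥0) < ρ.toNNReal := by simpa using hρ
  have hc : HasFPowerSeriesOnBall P.sum (cauchyPowerSeries P.sum 0 ρ.toNNReal) 0 ρ.toNNReal :=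
    hdiff.hasFPowerSeriesOnBall hρnn
  have heq : P = cauchyPowerSeries P.sum 0 ρ.toNNReal :=
    hball.hasFPowerSeriesAt.eq_formalMultilinearSeries hc.hasFPowerSeriesAt
  -- values on the circle agree with F
  have hFeq : ∀ q : ℂ, ‖q‖ = ρ → P.sum q = F q := by
    intro q hq
    have hmem : q ∈ Metric.eball (0:ℂ) P.radius := hsub (by simp [mem_closedBall, hq])
    have h1 := hball.hasSum (y := q) (by simpa using hmem)
    simp only [zero_add] at h1
    have h1' : HasSum (fun n => cs n * q ^ n) (P.sum q) := by
      simpa only [hPapp] using h1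
    exact h1'.unique (hsum q hq)
  intro n
  have hb := norm_cauchyPowerSeries_le P.sum 0 (ρ.toNNReal : ℝ) n
  have hM0 : 0 ≤ M := le_trans (norm_nonneg _) (hM (ρ:ℂ) (by simp [Complex.norm_real, abs_of_pos hρ]))
  have hint : (∫ θ : ℝ in (0)..2 * Real.pi, ‖P.sum (circleMap 0 (ρ.toNNReal : ℝ) θ)‖)
      ≤ 2 * Real.pi * M := by
    have habs : ∀ θ : ℝ, ‖(circleMap 0 (ρ.toNNReal:ℝ) θ)‖ = ρ := by
      intro θ
      rw [norm_circleMap_zero, Real.coe_toNNReal _ hρ.le, abs_of_pos hρ]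
    have hcont : Continuous fun θ : ℝ => ‖P.sum (circleMap 0 (ρ.toNNReal:ℝ) θ)‖ := by
      refine (ContinuousOn.comp_continuous (hdiff.continuousOn)
        (continuous_circleMap _ _) ?_).norm
      intro θ
      rw [mem_closedBall, dist_zero_right, habs θ,
        Real.coe_toNNReal _ hρ.le]
    calc (∫ θ : ℝ in (0)..2 * Real.pi, ‖P.sum (circleMap 0 (ρ.toNNReal : ℝ) θ)‖)
        ≤ ∫ _ : ℝ in (0)..2 * Real.pi, M := by
          apply intervalIntegral.integral_mono_on Real.two_pi_pos.le
            (hcont.intervalIntegrable _ _) (intervalIntegrable_const)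
          intro θ _
          rw [hFeq _ (habs θ)]
          exact hM _ (habs θ)
      _ = 2 * Real.pi * M := by simp [mul_comm]
  have hfac : (2 * Real.pi)⁻¹ *
      (∫ θ : ℝ in (0)..2 * Real.pi, ‖P.sum (circleMap 0 (ρ.toNNReal : ℝ) θ)‖) ≤ M := by
    calc (2 * Real.pi)⁻¹ *
        (∫ θ : ℝ in (0)..2 * Real.pi, ‖P.sum (circleMap 0 (ρ.toNNReal : ℝ) θ)‖)
        ≤ (2 * Real.pi)⁻¹ * (2 * Real.pi * M) :=
          mul_le_mul_of_nonneg_left hint (inv_nonneg.mpr Real.two_pi_pos.le)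
      _ = M := by field_simp
  have : ‖P n‖ ≤ M * |(ρ.toNNReal:ℝ)|⁻¹ ^ n := by
    rw [heq]
    exact hb.trans (mul_le_mul_of_nonneg_right hfac (by positivity))
  rw [hPnorm] at this
  rw [Real.coe_toNNReal _ hρ.le, abs_of_pos hρ] at this
  rw [div_eq_mul_inv, ← inv_pow]
  exact this

/-- Maximum principle on an annulus for a function holomorphic away from `0`. -/
lemma annulus_max_bound {φ : ℂ → ℂ} {r R C : ℝ} (h0 : 0 < r) (hrR : r < R)
    (hd : DifferentiableOn ℂ φ {(0:ℂ)}ᶜ)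
    (hC : ∀ w : ℂ, ‖w‖ = r ∨ ‖w‖ = R → ‖φ w‖ ≤ C) :
    ∀ z : ℂ, r < ‖z‖ → ‖z‖ < R → ‖φ z‖ ≤ C := by
  intro z hzr hzR
  set A : Set ℂ := ball (0:ℂ) R \ closedBall (0:ℂ) r with hA
  have hbd : Bornology.IsBounded A := isBounded_ball.subset diff_subset
  have hclos : closure A ⊆ {(0:ℂ)}ᶜ := by
    have h1 : A ⊆ (ball (0:ℂ) r)ᶜ := fun w hw => fun hmem => hw.2 (ball_subset_closedBall hmem)
    have h2 : closure A ⊆ (ball (0:ℂ) r)ᶜ := closure_minimal h1 isOpen_ball.isClosed_compl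
    intro w hw h0w
    rw [mem_singleton_iff] at h0w
    subst h0w
    exact h2 hw (by simp [h0] : (0:ℂ) ∈ ball (0:ℂ) r)
  have hdc : DiffContOnCl ℂ φ A := (hd.mono hclos).diffContOnCl
  have hfront : ∀ w ∈ frontier A, ‖φ w‖ ≤ C := by
    intro w hw
    have h1 : frontier A ⊆ frontier (ball (0:ℂ) R) ∪ frontier (closedBall (0:ℂ) r) := by
      rw [hA, diff_eq]
      refine (frontier_inter_subset _ _).trans ?_
      intro x hx
      rcases hx with hx | hx
      · exact Or.inl hx.1
      · right; rw [← frontier_compl]; exact hx.2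
    rcases h1 hw with hw' | hw'
    · rw [frontier_ball _ (h0.trans hrR).ne'] at hw'
      exact hC w (Or.inr (by simpa [Complex.dist_eq] using hw'))
    · rw [frontier_closedBall _ h0.ne'] at hw'
      exact hC w (Or.inl (by simpa [Complex.dist_eq] using hw'))
  have hzA : z ∈ A := by
    constructor
    · simpa [Complex.dist_eq] using hzR
    · simp only [mem_closedBall, dist_zero_right, not_le]
      exact hzr
  exact norm_le_of_forall_mem_frontier_norm_le hbd hdc hfront (subset_closure hzA)

/-- Cauchy estimate for the full (Fréchet) derivative of a function on `ℂ × ℂ`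
bounded on a ball. -/
lemma norm_fderiv_le_of_ball {F : ℂ × ℂ → ℂ} {x : ℂ × ℂ} {δ M : ℝ} (hδ : 0 < δ) (hM : 0 ≤ M)
    (hdiff : ∀ y ∈ ball x δ, DifferentiableAt ℂ F y)
    (hbd : ∀ y ∈ ball x δ, ‖F y‖ ≤ M) :
    ‖fderiv ℂ F x‖ ≤ 2 * M / δ := by
  have hxmem : x ∈ ball x δ := mem_ball_self hδ
  set L := fderiv ℂ F x with hL
  have key : ∀ w : ℂ × ℂ, ‖w‖ = 1 → ‖L w‖ ≤ M / (δ / 2) := by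
    intro w hw
    set G : ℂ → ℂ := fun t => F (x + t • w) with hG
    have hmem : ∀ t : ℂ, ‖t‖ < δ → x + t • w ∈ ball x δ := by
      intro t ht
      rw [mem_ball, dist_eq_norm]
      simp only [add_sub_cancel_left, norm_smul, hw, mul_one]
      exact ht
    have hGdiff : DifferentiableOn ℂ G (ball (0:ℂ) δ) := by
      intro t ht
      have ht' : ‖t‖ < δ := by simpa [Complex.dist_eq] using ht
      have h1 : DifferentiableAt ℂ (fun t : ℂ => x + t • w) t :=
        (differentiableAt_id.smul_const w).const_add x
      exact ((hdiff _ (hmem t ht')).comp t h1).differentiableWithinAt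
    have hA : HasDerivAt (fun t : ℂ => x + t • w) w 0 :=
      ((hasDerivAt_id (0:ℂ)).smul_const w).const_add x |>.congr_deriv (one_smul ℂ w)
    have hF : HasFDerivAt F L x := (hdiff x hxmem).hasFDerivAt
    have hF' : HasFDerivAt F L (x + (0:ℂ) • w) := by simpa using hF
    have hG0 : HasDerivAt G (L w) 0 := by
      exact hF'.comp_hasDerivAt (0:ℂ) hA
    have hdc : DiffContOnCl ℂ G (ball (0:ℂ) (δ/2)) := by
      refine DifferentiableOn.diffContOnCl ?_
      refine hGdiff.mono ?_
      refine (closure_ball (0:ℂ) (by positivity : (δ/2:ℝ) ≠ 0)).le.trans ?_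
      exact closedBall_subset_ball (by linarith)
    have hsb : ∀ t ∈ sphere (0:ℂ) (δ/2), ‖G t‖ ≤ M := by
      intro t ht
      have : ‖t‖ = δ / 2 := by simpa [Complex.dist_eq] using ht
      exact hbd _ (hmem t (by rw [this]; linarith))
    have := norm_deriv_le_of_forall_mem_sphere_norm_le (by positivity : (0:ℝ) < δ/2) hdc hsb
    rwa [hG0.deriv] at this
  have : ‖L‖ ≤ M / (δ/2) := by
    refine ContinuousLinearMap.opNorm_le_of_ball (ε := 1) one_pos (by positivity) ?_
    intro v hv
    rcases eq_or_ne v 0 with rfl | hv0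
    · simp
    · have hnv : (0:ℝ) < ‖v‖ := norm_pos_iff.mpr hv0
      have hunit : ‖(‖v‖⁻¹ : ℝ) • v‖ = 1 := norm_smul_inv_norm hv0
      have h1 := key _ hunit
      have h2 : L ((‖v‖⁻¹ : ℝ) • v) = (‖v‖⁻¹ : ℝ) • L v := L.map_smul_of_tower _ _
      rw [h2, norm_smul, norm_inv, norm_norm] at h1
      calc ‖L v‖ = ‖v‖ * (‖v‖⁻¹ * ‖L v‖) := by field_simp
        _ ≤ ‖v‖ * (M / (δ/2)) := by
            refine mul_le_mul_of_nonneg_left ?_ (norm_nonneg _)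
            simpa using h1
        _ = M / (δ/2) * ‖v‖ := by ring
  refine this.trans ?_
  rw [div_div_eq_mul_div]
  ring_nf
  exact le_refl _

lemma exists_between_ne_one {x y : ℝ} (h : x < y) : ∃ t, x < t ∧ t < y ∧ t ≠ 1 := by
  rcases ne_or_eq ((x + y) / 2) 1 with h1 | h1
  · exact ⟨(x + y) / 2, by linarith, by linarith, h1⟩
  · refine ⟨(x + (x + y) / 2) / 2, by linarith, by linarith, fun hc => ?_⟩
    rw [h1] at hc
    have : x < (x + y) / 2 := by linarith
    rw [h1] at this
    linarith

lemma key_bound (K : ℕ) (hK : 1 ≤ K) (f : ℂ × ℂ → ℂ) (c : ℕ → Polynomial ℂ) (g : Polynomial ℂ)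
    (hgz : ∀ z : ℂ, g.eval z = 0 → ‖z‖ = 1)
    (hf : DifferentiableOn ℂ f (domDK K))
    (hser : ∀ p ∈ domDK K, HasSum (fun n : ℕ => (c n).eval p.1 * p.2 ^ n) (f p))
    (N : ℕ → ℕ) (pn : ℕ → Polynomial ℂ)
    (hdiv : ∀ n : ℕ, Polynomial.X ^ (N n) * c n = g * pn n)
    {p₀ : ℂ × ℂ} (hp₀ : p₀ ∈ domDK K) :
    ∃ (V : Set (ℂ × ℂ)) (C t δ : ℝ), IsOpen V ∧ p₀ ∈ V ∧ 0 ≤ C ∧ 0 ≤ t ∧ t < 1 ∧ 0 < δ ∧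
      ∀ x ∈ V, ∀ y ∈ Metric.ball x δ, y.1 ≠ 0 ∧
        ∀ n, ‖(pn n).eval y.1 / y.1 ^ (N n) * y.2 ^ n‖ ≤ C * t ^ n := by
  obtain ⟨h1, h2, h3, h4⟩ := hp₀
  set A := ‖p₀.1‖ with hA
  set B := ‖p₀.2‖ with hB
  set kR : ℝ := (K : ℝ) with hkR
  have hkR0 : 0 < kR := by
    have : (1:ℝ) ≤ (K:ℝ) := by exact_mod_cast hK
    linarith
  have hA0 : 0 < A := lt_trans (Real.rpow_pos_of_pos h3 _) h1
  have hAk0 : 0 < A ^ kR := Real.rpow_pos_of_pos hA0 _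
  have hexp : (1 / kR) * kR = 1 := by field_simp
  have haK : B < A ^ kR := by
    have h := Real.rpow_lt_rpow (Real.rpow_nonneg h3.le _) h1 hkR0
    rwa [← Real.rpow_mul h3.le, hexp, Real.rpow_one] at h
  have haK' : A ^ kR < B⁻¹ := by
    have h := Real.rpow_lt_rpow (le_of_lt hA0) h2 hkR0
    rwa [← Real.rpow_mul h3.le, neg_div, neg_mul, hexp, Real.rpow_neg_one] at h
  have hBaKinv : B < (A ^ kR)⁻¹ := by
    have h := inv_strictAnti₀ hAk0 haK'
    rwa [inv_inv] at h
  -- choose radii in the q-variable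
  set ρ' : ℝ := min (min ((B + A ^ kR) / 2) ((B + (A ^ kR)⁻¹) / 2)) ((B + 1) / 2) with hρ'def
  have hρ'B : B < ρ' := by
    refine lt_min (lt_min (by linarith) (by linarith)) (by linarith)
  have hρ'0 : 0 < ρ' := h3.trans hρ'B
  have hρ'1 : ρ' < 1 := lt_of_le_of_lt (min_le_right _ _) (by linarith)
  have hρ'aK : ρ' < A ^ kR :=
    lt_of_le_of_lt ((min_le_left _ _).trans (min_le_left _ _)) (by linarith)
  have hρ'aK' : ρ' < (A ^ kR)⁻¹ :=
    lt_of_le_of_lt ((min_le_left _ _).trans (min_le_right _ _)) (by linarith)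
  set ρ : ℝ := (B + ρ') / 2 with hρdef
  have hBρ : B < ρ := by rw [hρdef]; linarith
  have hρρ' : ρ < ρ' := by rw [hρdef]; linarith
  have hρ0 : 0 < ρ := h3.trans hBρ
  -- choose radii in the z-variable
  set e : ℝ := ρ' ^ (1 / kR) with hedef
  have he0 : 0 < e := Real.rpow_pos_of_pos hρ'0 _
  have hexp' : kR * (1 / kR) = 1 := by field_simp
  have hea : e < A := by
    have h := Real.rpow_lt_rpow hρ'0.le hρ'aK (by positivity : (0:ℝ) < 1 / kR)
    rwa [← Real.rpow_mul hA0.le, hexp', Real.rpow_one] at h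
  have heA' : A < e⁻¹ := by
    have h := Real.rpow_lt_rpow hρ'0.le hρ'aK' (by positivity : (0:ℝ) < 1 / kR)
    rw [← Real.rpow_neg hA0.le, ← Real.rpow_mul hA0.le] at h
    have hexp'' : -kR * (1 / kR) = -1 := by field_simp
    rw [hexp'', Real.rpow_neg_one] at h
    have h' := inv_strictAnti₀ he0 h
    rwa [inv_inv] at h'
  obtain ⟨r, her, hra, hr1⟩ := exists_between_ne_one hea
  obtain ⟨R, haR, hRE, hR1⟩ := exists_between_ne_one heA'
  have hr0 : 0 < r := he0.trans her
  have hrR : r < R := hra.trans haR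
  -- membership of the relevant circles in the domain
  have hq1K : ∀ s : ℝ, s = ρ ∨ s = ρ' → s ^ ((1:ℝ) / K) ≤ e := by
    intro s hs
    have hsρ' : s ≤ ρ' := by rcases hs with rfl | rfl; exacts [hρρ'.le, le_refl _]
    have hs0 : 0 ≤ s := by rcases hs with rfl | rfl; exacts [hρ0.le, hρ'0.le]
    exact Real.rpow_le_rpow hs0 hsρ' (by positivity)
  have hmemD : ∀ z q : ℂ, r ≤ ‖z‖ → ‖z‖ ≤ R →
      (‖q‖ = ρ ∨ ‖q‖ = ρ') → (z, q) ∈ domDK K := by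
    intro z q hzr hzR hq
    have hq0 : 0 < ‖q‖ := by rcases hq with h | h <;> rw [h]; exacts [hρ0, hρ'0]
    have hq1 : ‖q‖ < 1 := by
      rcases hq with h | h <;> rw [h]
      exacts [hρρ'.trans hρ'1, hρ'1]
    have hqe : ‖q‖ ^ ((1:ℝ)/K) ≤ e := hq1K _ hq
    refine ⟨lt_of_le_of_lt hqe (lt_of_lt_of_le her hzr), ?_, hq0, hq1⟩
    have h5 : ‖q‖ ^ (-(1:ℝ)/K) = (‖q‖ ^ ((1:ℝ)/K))⁻¹ := by
      rw [neg_div, Real.rpow_neg hq0.le]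
    rw [h5]
    calc ‖z‖ ≤ R := hzR
      _ < e⁻¹ := hRE
      _ ≤ (‖q‖ ^ ((1:ℝ)/K))⁻¹ := by
          apply inv_anti₀ _ hqe
          positivity
  -- sup of ‖f‖ on the two circles times the circle |q| = ρ
  have hTcomp : IsCompact (sphere (0:ℂ) r ∪ sphere (0:ℂ) R) :=
    (isCompact_sphere _ _).union (isCompact_sphere _ _)
  have hTne : (sphere (0:ℂ) r ∪ sphere (0:ℂ) R).Nonempty :=
    (NormedSpace.sphere_nonempty.mpr hr0.le).mono subset_union_left
  have hmemT : ∀ w : ℂ, w ∈ sphere (0:ℂ) r ∪ sphere (0:ℂ) R ↔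
      (‖w‖ = r ∨ ‖w‖ = R) := by
    intro w
    simp [mem_sphere, Complex.dist_eq]
  have hScomp : IsCompact ((sphere (0:ℂ) r ∪ sphere (0:ℂ) R) ×ˢ sphere (0:ℂ) ρ) :=
    hTcomp.prod (isCompact_sphere _ _)
  have hSne : ((sphere (0:ℂ) r ∪ sphere (0:ℂ) R) ×ˢ sphere (0:ℂ) ρ).Nonempty :=
    hTne.prod (NormedSpace.sphere_nonempty.mpr hρ0.le)
  have hSsub : ((sphere (0:ℂ) r ∪ sphere (0:ℂ) R) ×ˢ sphere (0:ℂ) ρ) ⊆ domDK K := by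
    rintro ⟨z, q⟩ ⟨hz, hq⟩
    have hz' := (hmemT z).mp hz
    have hq' : ‖q‖ = ρ := by simpa [mem_sphere, Complex.dist_eq] using hq
    refine hmemD z q ?_ ?_ (Or.inl hq')
    · rcases hz' with h | h
      · exact h.symm.le
      · exact hrR.le.trans h.ge
    · rcases hz' with h | h
      · exact h.trans_le hrR.le
      · exact h.le
  obtain ⟨x₀, hx₀S, hx₀'⟩ := hScomp.exists_isMaxOn hSne ((hf.continuousOn.mono hSsub).norm)
  have hx₀ : ∀ p ∈ (sphere (0:ℂ) r ∪ sphere (0:ℂ) R) ×ˢ sphere (0:ℂ) ρ, ‖f p‖ ≤ ‖f x₀‖ :=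
    fun p hp => hx₀' hp
  set M : ℝ := ‖f x₀‖ with hMdef
  have hM0 : 0 ≤ M := norm_nonneg _
  -- min of ‖g.eval‖ on the two circles
  obtain ⟨w₀, hw₀T, hw₀'⟩ := hTcomp.exists_isMinOn hTne
    ((Polynomial.continuous g).norm.continuousOn)
  have hw₀ : ∀ w ∈ sphere (0:ℂ) r ∪ sphere (0:ℂ) R, ‖g.eval w₀‖ ≤ ‖g.eval w‖ :=
    fun w hw => hw₀' hw
  set m : ℝ := ‖g.eval w₀‖ with hmdef
  have hm0 : 0 < m := by
    rw [hmdef, norm_pos_iff]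
    intro hgw
    have := hgz _ hgw
    rcases (hmemT w₀).mp hw₀T with h | h <;> rw [h] at this
    exacts [hr1 this, hR1 this]
  -- Step A: coefficient bounds on the circles
  have hcoef : ∀ z : ℂ, (‖z‖ = r ∨ ‖z‖ = R) →
      ∀ n, ‖(c n).eval z‖ ≤ M / ρ ^ n := by
    intro z hz
    have hzr : r ≤ ‖z‖ := by
      rcases hz with h | h
      · exact h.symm.le
      · exact hrR.le.trans h.ge
    have hzR : ‖z‖ ≤ R := by
      rcases hz with h | h
      · exact h.trans_le hrR.le
      · exact h.le
    refine cauchy_coeff_bound hρ0 hρρ' (F := fun q => f (z, q)) ?_ ?_ ?_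
    · intro q hq
      exact hser (z, q) (hmemD z q hzr hzR (Or.inl hq))
    · refine ⟨(ρ' : ℂ), by simp [Complex.norm_real, abs_of_pos hρ'0], ?_⟩
      exact (hser ((z, (ρ' : ℂ))) (hmemD z _ hzr hzR (Or.inr (by
        simp [Complex.norm_real, abs_of_pos hρ'0])))).summable
    · intro q hq
      refine hx₀ (z, q) ⟨(hmemT z).mpr hz, ?_⟩
      simp [mem_sphere, Complex.dist_eq, hq]
  -- Step B: bounds for the Laurent quotients on the closed annulus
  have hφ : ∀ n, ∀ z : ℂ, r < ‖z‖ → ‖z‖ < R →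
      ‖(pn n).eval z / z ^ (N n)‖ ≤ (M / m) / ρ ^ n := by
    intro n
    refine annulus_max_bound hr0 hrR ?_ ?_
    · intro z hz
      have hz0 : z ≠ 0 := by simpa using hz
      exact (((pn n).differentiableAt).div (differentiableAt_pow _)
        (pow_ne_zero _ hz0)).differentiableWithinAt
    · intro w hw
      have hw0 : w ≠ 0 := by
        intro hc
        rcases hw with h | h <;> rw [hc] at h <;> simp at h <;> linarith
      have hgw : g.eval w ≠ 0 := by
        intro hc
        have := hgz _ hc
        rcases hw with h | h <;> rw [h] at this
        exacts [hr1 this, hR1 this]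
      have hev : w ^ (N n) * (c n).eval w = g.eval w * (pn n).eval w := by
        have := congrArg (Polynomial.eval w) (hdiv n)
        simpa [Polynomial.eval_mul, Polynomial.eval_pow] using this
      have hent : (pn n).eval w / w ^ (N n) = (c n).eval w / g.eval w := by
        field_simp
        linear_combination -hev
      rw [hent, norm_div]
      have h6 : m ≤ ‖g.eval w‖ := hw₀ w ((hmemT w).mpr hw)
      calc ‖(c n).eval w‖ / ‖g.eval w‖ ≤ (M / ρ ^ n) / m :=
            div_le_div₀ (by positivity) (hcoef w hw n) hm0 h6
        _ = (M / m) / ρ ^ n := by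
            rw [div_div, div_div, mul_comm]
  -- assemble the neighbourhood and constants
  set r' : ℝ := (r + A) / 2 with hr'def
  set R' : ℝ := (A + R) / 2 with hR'def
  set b' : ℝ := (B + ρ) / 2 with hb'def
  set ρ₁ : ℝ := (b' + ρ) / 2 with hρ₁def
  have hb'ρ : b' < ρ := by rw [hb'def]; linarith
  have hb'0 : 0 < b' := by rw [hb'def]; linarith
  have hρ₁ρ : ρ₁ < ρ := by rw [hρ₁def]; linarith
  have hρ₁0 : 0 < ρ₁ := by rw [hρ₁def]; linarith
  set δ : ℝ := min (min ((r' - r)) (R - R')) ((ρ - b') / 2) with hδdef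
  have hδ0 : 0 < δ := by
    refine lt_min (lt_min ?_ ?_) ?_ <;> [skip; skip; skip] <;>
      simp only [hr'def, hR'def, hb'def] <;> linarith
  refine ⟨{p : ℂ × ℂ | r' < ‖p.1‖ ∧ ‖p.1‖ < R' ∧ ‖p.2‖ < b'},
    M / m, ρ₁ / ρ, δ, ?_, ?_, by positivity, by positivity, ?_, hδ0, ?_⟩
  · refine IsOpen.inter (isOpen_Ioi.preimage (continuous_norm.comp continuous_fst)) ?_
    exact IsOpen.inter (isOpen_Iio.preimage (continuous_norm.comp continuous_fst))
      (isOpen_Iio.preimage (continuous_norm.comp continuous_snd))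
  · refine ⟨?_, ?_, ?_⟩ <;> simp only [hr'def, hR'def, hb'def, ← hA, ← hB] <;> linarith
  · rw [div_lt_one hρ0]; exact hρ₁ρ
  · rintro x ⟨hx1, hx2, hx3⟩ y hy
    have hd1 : dist y.1 x.1 < δ := lt_of_le_of_lt (by rw [Prod.dist_eq]; exact le_max_left _ _)
      (mem_ball.mp hy)
    have hd2 : dist y.2 x.2 < δ := lt_of_le_of_lt (by rw [Prod.dist_eq]; exact le_max_right _ _)
      (mem_ball.mp hy)
    have hy1r : r < ‖y.1‖ := by
      have h7 : ‖x.1‖ - ‖y.1‖ ≤ dist y.1 x.1 := by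
        rw [dist_comm, dist_eq_norm]
        exact norm_sub_norm_le _ _
      have hδr : δ ≤ r' - r := (min_le_left _ _).trans (min_le_left _ _)
      linarith
    have hy1R : ‖y.1‖ < R := by
      have h7 : ‖y.1‖ - ‖x.1‖ ≤ dist y.1 x.1 := by
        rw [dist_eq_norm]
        exact norm_sub_norm_le _ _
      have hδR : δ ≤ R - R' := (min_le_left _ _).trans (min_le_right _ _)
      linarith
    have hy2 : ‖y.2‖ < ρ₁ := by
      have h7 : ‖y.2‖ - ‖x.2‖ ≤ dist y.2 x.2 := by
        rw [dist_eq_norm]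
        exact norm_sub_norm_le _ _
      have hδb : δ ≤ (ρ - b') / 2 := min_le_right _ _
      rw [hρ₁def]
      linarith
    have hy10 : y.1 ≠ 0 := by
      intro hc
      rw [hc] at hy1r
      simp at hy1r
      linarith
    refine ⟨hy10, fun n => ?_⟩
    rw [norm_mul, norm_pow]
    calc ‖(pn n).eval y.1 / y.1 ^ (N n)‖ * ‖y.2‖ ^ n
        ≤ ((M / m) / ρ ^ n) * ρ₁ ^ n := by
          refine mul_le_mul (hφ n y.1 hy1r hy1R) ?_ (by positivity) (by positivity)
          exact pow_le_pow_left₀ (norm_nonneg _) (le_of_lt hy2) n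
      _ = (M / m) * (ρ₁ / ρ) ^ n := by
          rw [div_mul_eq_mul_div, mul_div_assoc, ← div_pow]


/-- Let `f(z,q) = Σ_{n≥0} c_n(z) qⁿ` be holomorphic on `D_K` with each `c_n` a polynomial,
and let `g ≠ 0` be a polynomial whose zeros all lie on the unit circle.  Suppose that for
each `n` the rational function `b_n(z) = c_n(z)/g(z)` is a Laurent polynomial, i.e.
`z^{N n} c_n(z) = g(z) p_n(z)` for a polynomial `p_n`, so `b_n(z) = p_n(z)/z^{N n}`.
Then `h(z,q) = Σ_{n≥0} b_n(z) qⁿ` converges on `D_K` and defines a holomorphic function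
there. -/
theorem laurent_quotient_series_holomorphic (K : ℕ) (hK : 1 ≤ K)
    (f : ℂ × ℂ → ℂ) (c : ℕ → Polynomial ℂ) (g : Polynomial ℂ) (hg : g ≠ 0)
    (hgz : ∀ z : ℂ, g.eval z = 0 → ‖z‖ = 1)
    (hf : DifferentiableOn ℂ f (domDK K))
    (hser : ∀ p ∈ domDK K, HasSum (fun n : ℕ => (c n).eval p.1 * p.2 ^ n) (f p))
    (N : ℕ → ℕ) (pn : ℕ → Polynomial ℂ)
    (hdiv : ∀ n : ℕ, Polynomial.X ^ (N n) * c n = g * pn n) :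
    ∃ h : ℂ × ℂ → ℂ,
      DifferentiableOn ℂ h (domDK K) ∧
      ∀ p ∈ domDK K,
        HasSum (fun n : ℕ => (pn n).eval p.1 / p.1 ^ (N n) * p.2 ^ n) (h p) := by
  set u : ℕ → ℂ × ℂ → ℂ := fun n p => (pn n).eval p.1 / p.1 ^ (N n) * p.2 ^ n with hu
  have hudiff : ∀ (n : ℕ) (y : ℂ × ℂ), y.1 ≠ 0 → DifferentiableAt ℂ (u n) y := by
    intro n y hy
    have h1 : DifferentiableAt ℂ (fun p : ℂ × ℂ => (pn n).eval p.1) y :=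
      ((pn n).differentiableAt).comp y differentiableAt_fst
    have h2 : DifferentiableAt ℂ (fun p : ℂ × ℂ => p.1 ^ (N n)) y :=
      differentiableAt_fst.pow _
    have h3 : DifferentiableAt ℂ (fun p : ℂ × ℂ => p.2 ^ n) y :=
      differentiableAt_snd.pow _
    have h4 : DifferentiableAt ℂ
        (fun p : ℂ × ℂ => (pn n).eval p.1 / p.1 ^ (N n) * p.2 ^ n) y := by
      simp only [div_eq_mul_inv]
      exact (h1.mul (h2.inv (pow_ne_zero _ hy))).mul h3
    exact h4
  set h : ℂ × ℂ → ℂ := fun p => ∑' n, u n p with hh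
  have hsummable : ∀ p ∈ domDK K, Summable (fun n => u n p) := by
    intro p hp
    obtain ⟨V, C, t, δ, hVopen, hpV, hC0, ht0, ht1, hδ0, hbd⟩ :=
      key_bound K hK f c g hgz hf hser N pn hdiv hp
    refine Summable.of_norm_bounded
      ((summable_geometric_of_lt_one ht0 ht1).mul_left C) ?_
    intro n
    exact (hbd p hpV p (mem_ball_self hδ0)).2 n
  refine ⟨h, ?_, fun p hp => (hsummable p hp).hasSum⟩
  intro p₀ hp₀
  obtain ⟨V, C, t, δ, hVopen, hpV, hC0, ht0, ht1, hδ0, hbd⟩ :=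
    key_bound K hK f c g hgz hf hser N pn hdiv hp₀
  have hfder : ∀ n, ∀ x ∈ V, ‖fderiv ℂ (u n) x‖ ≤ 2 * (C * t ^ n) / δ := by
    intro n x hx
    refine norm_fderiv_le_of_ball hδ0 (by positivity) ?_ ?_
    · exact fun y hy => hudiff n y (hbd x hx y hy).1
    · exact fun y hy => (hbd x hx y hy).2 n
  have hsum' : Summable (fun n => 2 * (C * t ^ n) / δ) := by
    have := (summable_geometric_of_lt_one ht0 ht1).mul_left (2 * C / δ)
    refine this.congr fun n => ?_
    field_simp
  have huni : TendstoUniformlyOn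
      (fun (s : Finset ℕ) x => ∑ n ∈ s, fderiv ℂ (u n) x)
      (fun x => ∑' n, fderiv ℂ (u n) x) atTop V :=
    tendstoUniformlyOn_tsum hsum' (fun n x hx => hfder n x hx)
  have hps : ∀ (s : Finset ℕ), ∀ x' : ℂ × ℂ, x' ∈ V →
      HasFDerivAt (fun p => ∑ n ∈ s, u n p) (∑ n ∈ s, fderiv ℂ (u n) x') x' := by
    intro s x' hx'
    refine HasFDerivAt.fun_sum ?_
    intro i _
    exact (hudiff i x' (hbd x' hx' x' (mem_ball_self hδ0)).1).hasFDerivAt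
  have hpt : ∀ x' : ℂ × ℂ, x' ∈ V →
      Tendsto (fun s : Finset ℕ => ∑ n ∈ s, u n x') atTop (𝓝 (h x')) := by
    intro x' hx'
    have : Summable fun n => u n x' := by
      refine Summable.of_norm_bounded
        ((summable_geometric_of_lt_one ht0 ht1).mul_left C) ?_
      intro n
      exact (hbd x' hx' x' (mem_ball_self hδ0)).2 n
    exact this.hasSum
  have hHasF : HasFDerivAt h (∑' n, fderiv ℂ (u n) p₀) p₀ :=
    hasFDerivAt_of_tendstoUniformlyOn hVopen huni hps hpt hpV
  exact hHasF.differentiableAt.differentiableWithinAt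
end
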